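/- Let λ_i > 0 and μ_i > 0 for i = 1, 2. Then the ratio t ↦ φ^C_1(t)/φ^C_2(t) is monotone increasing on (0, ∞) (i.e. τ^C_1 ≥_lr τ^C_2) if and only if 2(λ₂ − λ₁) + μ₂ − μ₁ ≥ max(b₂ − b₁, 0). -/
import Mathlib

section AuxLemmas

lemma sinh_le_mul_cosh {x : ℝ} (hx : 0 ≤ x) : Real.sinh x ≤ x * Real.cosh x := by
  have key : MonotoneOn (fun y : ℝ => y * Real.cosh y - Real.sinh y) (Set.Ici 0) := by
    apply monotoneOn_of_deriv_nonneg (convex_Ici 0)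
    · exact ((continuous_id.mul Real.continuous_cosh).sub Real.continuous_sinh).continuousOn
    · intro y _
      exact (((hasDerivAt_id y).mul (Real.hasDerivAt_cosh y)).sub
        (Real.hasDerivAt_sinh y)).differentiableAt.differentiableWithinAt
    · intro y hy
      rw [interior_Ici, Set.mem_Ioi] at hy
      have hD : HasDerivAt (fun y : ℝ => y * Real.cosh y - Real.sinh y)
          (1 * Real.cosh y + y * Real.sinh y - Real.cosh y) y :=
        ((hasDerivAt_id y).mul (Real.hasDerivAt_cosh y)).sub (Real.hasDerivAt_sinh y)
      rw [hD.deriv]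
      have hs : 0 ≤ Real.sinh y := Real.sinh_nonneg_iff.mpr hy.le
      have := mul_nonneg hy.le hs
      simp only [id_eq, one_mul]
      linarith
  have h := key (Set.self_mem_Ici) (Set.mem_Ici.mpr hx) hx
  simp only [Real.cosh_zero, Real.sinh_zero, zero_mul, sub_zero, mul_zero] at h
  linarith

lemma mul_sinh_le {u v : ℝ} (hv : 0 ≤ v) (huv : v ≤ u) : u * Real.sinh v ≤ v * Real.sinh u := by
  rcases eq_or_lt_of_le hv with rfl | hv'
  · simp
  · have hu : 0 < u := lt_of_lt_of_le hv' huv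
    have mono : MonotoneOn (fun w : ℝ => Real.sinh w / w) (Set.Ioi 0) := by
      apply monotoneOn_of_deriv_nonneg (convex_Ioi 0)
      · exact ContinuousOn.div Real.continuous_sinh.continuousOn continuousOn_id
          (fun w hw => ne_of_gt hw)
      · rw [interior_Ioi]; intro w hw
        exact ((Real.hasDerivAt_sinh w).div (hasDerivAt_id w)
          (ne_of_gt hw)).differentiableAt.differentiableWithinAt
      · rw [interior_Ioi]; intro w hw
        have hD : HasDerivAt (fun w : ℝ => Real.sinh w / w)
            ((Real.cosh w * w - Real.sinh w * 1) / w ^ 2) w :=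
          (Real.hasDerivAt_sinh w).div (hasDerivAt_id w) (ne_of_gt hw)
        rw [hD.deriv]
        have h1 := sinh_le_mul_cosh (le_of_lt hw)
        apply div_nonneg _ (sq_nonneg _)
        simp only [id_eq, one_mul, mul_one]
        linarith
    have h := mono (Set.mem_Ioi.mpr hv') (Set.mem_Ioi.mpr hu) huv
    rw [div_le_div_iff₀ hv' hu] at h
    nlinarith [h]

lemma cosh_le_exp_sq {x : ℝ} (hx : 0 ≤ x) : Real.cosh x ≤ Real.exp (x ^ 2 / 2) := by
  have key : MonotoneOn (fun w : ℝ => w ^ 2 / 2 - Real.log (Real.cosh w)) (Set.Ici 0) := by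
    apply monotoneOn_of_deriv_nonneg (convex_Ici 0)
    · apply ContinuousOn.sub (by fun_prop)
      exact ContinuousOn.log (by fun_prop) (fun w _ => (Real.cosh_pos w).ne')
    · intro y _
      have hd : HasDerivAt (fun w : ℝ => w ^ 2 / 2 - Real.log (Real.cosh w))
          (2 * y ^ 1 / 2 - Real.sinh y / Real.cosh y) y :=
        ((hasDerivAt_pow 2 y).div_const 2).sub ((Real.hasDerivAt_cosh y).log (Real.cosh_pos y).ne')
      exact hd.differentiableAt.differentiableWithinAt
    · intro y hy
      rw [interior_Ici, Set.mem_Ioi] at hy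
      have hd : HasDerivAt (fun w : ℝ => w ^ 2 / 2 - Real.log (Real.cosh w))
          (2 * y ^ 1 / 2 - Real.sinh y / Real.cosh y) y :=
        ((hasDerivAt_pow 2 y).div_const 2).sub ((Real.hasDerivAt_cosh y).log (Real.cosh_pos y).ne')
      rw [hd.deriv]
      have h1 := sinh_le_mul_cosh hy.le
      have h2 : Real.sinh y / Real.cosh y ≤ y := by
        rw [div_le_iff₀ (Real.cosh_pos y)]; linarith
      simp only [pow_one]
      linarith
  have h := key (Set.self_mem_Ici) (Set.mem_Ici.mpr hx) hx
  simp only [Real.cosh_zero, Real.log_one, ne_eq, OfNat.ofNat_ne_zero, not_false_eq_true,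
    zero_pow, zero_div, sub_zero, zero_sub, neg_nonpos] at h
  have h' : Real.log (Real.cosh x) ≤ x ^ 2 / 2 := by linarith
  exact (Real.log_le_iff_le_exp (Real.cosh_pos x)).mp h'

lemma coreG {b1 b2 d t : ℝ} (hb1 : 0 < b1) (hb2 : 0 < b2) (ht : 0 < t)
    (hd : max (b2 - b1) 0 ≤ d) :
    0 ≤ d * (Real.sinh (b1 * t) * Real.sinh (b2 * t))
      + b1 * Real.cosh (b1 * t) * Real.sinh (b2 * t)
      - b2 * Real.sinh (b1 * t) * Real.cosh (b2 * t) := by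
  have hd0 : 0 ≤ d := le_trans (le_max_right _ _) hd
  have hx : 0 < b1 * t := mul_pos hb1 ht
  have hy : 0 < b2 * t := mul_pos hb2 ht
  have hs1 : 0 < Real.sinh (b1 * t) := Real.sinh_pos_iff.mpr hx
  have hs2 : 0 < Real.sinh (b2 * t) := Real.sinh_pos_iff.mpr hy
  rcases le_total b2 b1 with hcase | hcase
  · have key : (b1 * t + b2 * t) * Real.sinh (b1 * t - b2 * t)
        ≤ (b1 * t - b2 * t) * Real.sinh (b1 * t + b2 * t) :=
      mul_sinh_le (by nlinarith) (by nlinarith)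
    rw [Real.sinh_add, Real.sinh_sub] at key
    have key2 : (b2 * t) * (Real.sinh (b1 * t) * Real.cosh (b2 * t))
        ≤ (b1 * t) * (Real.cosh (b1 * t) * Real.sinh (b2 * t)) := by nlinarith [key]
    have key3 : b2 * (Real.sinh (b1 * t) * Real.cosh (b2 * t))
        ≤ b1 * (Real.cosh (b1 * t) * Real.sinh (b2 * t)) := by
      exact le_of_mul_le_mul_left
        (show t * (b2 * (Real.sinh (b1 * t) * Real.cosh (b2 * t)))
            ≤ t * (b1 * (Real.cosh (b1 * t) * Real.sinh (b2 * t))) by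
          calc t * (b2 * (Real.sinh (b1 * t) * Real.cosh (b2 * t)))
              = (b2 * t) * (Real.sinh (b1 * t) * Real.cosh (b2 * t)) := by ring
            _ ≤ (b1 * t) * (Real.cosh (b1 * t) * Real.sinh (b2 * t)) := key2
            _ = t * (b1 * (Real.cosh (b1 * t) * Real.sinh (b2 * t))) := by ring) ht
    have hnn : 0 ≤ d * (Real.sinh (b1 * t) * Real.sinh (b2 * t)) :=
      mul_nonneg hd0 (mul_nonneg hs1.le hs2.le)
    nlinarith [key3, hnn]
  · have hd' : b2 - b1 ≤ d := le_trans (le_max_left _ _) hd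
    have hxy : b1 * t ≤ b2 * t := mul_le_mul_of_nonneg_right hcase ht.le
    have k1 : (b2 * t) * Real.sinh (b1 * t) ≤ (b1 * t) * Real.sinh (b2 * t) :=
      mul_sinh_le hx.le hxy
    have k2 : Real.exp (-(b2 * t)) ≤ Real.exp (-(b1 * t)) :=
      Real.exp_le_exp.mpr (by linarith)
    have k3 : (b2 * t) * Real.sinh (b1 * t) * Real.exp (-(b2 * t))
        ≤ (b1 * t) * Real.sinh (b2 * t) * Real.exp (-(b1 * t)) :=
      calc (b2 * t) * Real.sinh (b1 * t) * Real.exp (-(b2 * t))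
          ≤ (b2 * t) * Real.sinh (b1 * t) * Real.exp (-(b1 * t)) := by
            apply mul_le_mul_of_nonneg_left k2 (by positivity)
        _ ≤ (b1 * t) * Real.sinh (b2 * t) * Real.exp (-(b1 * t)) := by
            apply mul_le_mul_of_nonneg_right k1 (Real.exp_pos _).le
    have k4 : b2 * Real.sinh (b1 * t) * Real.exp (-(b2 * t))
        ≤ b1 * Real.sinh (b2 * t) * Real.exp (-(b1 * t)) := by
      exact le_of_mul_le_mul_left
        (show t * (b2 * Real.sinh (b1 * t) * Real.exp (-(b2 * t)))
            ≤ t * (b1 * Real.sinh (b2 * t) * Real.exp (-(b1 * t))) by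
          calc t * (b2 * Real.sinh (b1 * t) * Real.exp (-(b2 * t)))
              = (b2 * t) * Real.sinh (b1 * t) * Real.exp (-(b2 * t)) := by ring
            _ ≤ (b1 * t) * Real.sinh (b2 * t) * Real.exp (-(b1 * t)) := k3
            _ = t * (b1 * Real.sinh (b2 * t) * Real.exp (-(b1 * t))) := by ring) ht
    have e1 : b1 * Real.sinh (b2 * t) * (Real.cosh (b1 * t) - Real.sinh (b1 * t))
        = b1 * Real.sinh (b2 * t) * Real.exp (-(b1 * t)) := by
      rw [Real.cosh_sub_sinh]
    have e2 : b2 * Real.sinh (b1 * t) * (Real.cosh (b2 * t) - Real.sinh (b2 * t))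
        = b2 * Real.sinh (b1 * t) * Real.exp (-(b2 * t)) := by
      rw [Real.cosh_sub_sinh]
    have prod : 0 ≤ (d - (b2 - b1)) * (Real.sinh (b1 * t) * Real.sinh (b2 * t)) :=
      mul_nonneg (by linarith) (mul_nonneg hs1.le hs2.le)
    nlinarith [k4, e1, e2, prod]

end AuxLemmas

/-- `b_i = sqrt(μ_i² + 4 λ_i μ_i)` for the cold standby system. -/
noncomputable def bC (l m : ℝ) : ℝ := Real.sqrt (m ^ 2 + 4 * l * m)

/-- Density of the lifetime of the Markovian two-unit cold standby system. -/
noncomputable def phiC (l m t : ℝ) : ℝ :=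
  Real.exp (-((2 * l + m) * t / 2)) * (2 * l ^ 2 / bC l m) * Real.sinh (bC l m * t / 2)

lemma bC_pos {l m : ℝ} (hl : 0 < l) (hm : 0 < m) : 0 < bC l m := by
  apply Real.sqrt_pos.mpr; nlinarith

set_option maxHeartbeats 1000000 in
lemma phiC_ratio (l1 m1 l2 m2 t : ℝ)
    (hb1 : 0 < bC l1 m1) (hb2 : 0 < bC l2 m2) (ht : 0 < t) :
    phiC l1 m1 t / phiC l2 m2 t =
      ((2 * l1 ^ 2 / bC l1 m1) / (2 * l2 ^ 2 / bC l2 m2)) *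
        (Real.exp ((((2 * l2 + m2) - (2 * l1 + m1)) / 2) * t) *
          (Real.sinh ((bC l1 m1 / 2) * t) / Real.sinh ((bC l2 m2 / 2) * t))) := by
  unfold phiC
  have hS2 : Real.sinh ((bC l2 m2 / 2) * t) ≠ 0 :=
    (Real.sinh_pos_iff.mpr (mul_pos (div_pos hb2 two_pos) ht)).ne'
  rw [show bC l1 m1 * t / 2 = (bC l1 m1 / 2) * t from by ring,
      show bC l2 m2 * t / 2 = (bC l2 m2 / 2) * t from by ring,
      show -((2 * l1 + m1) * t / 2)
          = (((2 * l2 + m2) - (2 * l1 + m1)) / 2) * t + -((2 * l2 + m2) * t / 2) from by ring,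
      Real.exp_add]
  have hE := (Real.exp_ne_zero (-((2 * l2 + m2) * t / 2)))
  rw [mul_div_mul_comm, mul_div_mul_comm, mul_div_assoc, div_self hE, mul_one]
  ring

theorem cold_lr_iff (l1 l2 m1 m2 : ℝ)
    (h1 : 0 < l1) (h2 : 0 < l2) (hm1 : 0 < m1) (hm2 : 0 < m2) :
    MonotoneOn (fun t : ℝ => phiC l1 m1 t / phiC l2 m2 t) (Set.Ioi (0 : ℝ)) ↔
      2 * (l2 - l1) + m2 - m1 ≥ max (bC l2 m2 - bC l1 m1) 0 := by
  have hbb1 : 0 < bC l1 m1 := bC_pos h1 hm1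
  have hbb2 : 0 < bC l2 m2 := bC_pos h2 hm2
  set B1 : ℝ := bC l1 m1 / 2 with hB1
  set B2 : ℝ := bC l2 m2 / 2 with hB2
  set K : ℝ := (2 * l1 ^ 2 / bC l1 m1) / (2 * l2 ^ 2 / bC l2 m2) with hKdef
  set d : ℝ := ((2 * l2 + m2) - (2 * l1 + m1)) / 2 with hd
  have hB1p : 0 < B1 := by rw [hB1]; exact div_pos hbb1 two_pos
  have hB2p : 0 < B2 := by rw [hB2]; exact div_pos hbb2 two_pos
  have hK : 0 < K := by
    rw [hKdef]
    exact div_pos (div_pos (mul_pos two_pos (pow_pos h1 2)) hbb1)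
      (div_pos (mul_pos two_pos (pow_pos h2 2)) hbb2)
  set g : ℝ → ℝ :=
    fun t => K * (Real.exp (d * t) * (Real.sinh (B1 * t) / Real.sinh (B2 * t))) with hg
  have hratio : ∀ t : ℝ, 0 < t → phiC l1 m1 t / phiC l2 m2 t = g t := fun t ht =>
    phiC_ratio l1 m1 l2 m2 t hbb1 hbb2 ht
  have hS2ne : ∀ t ∈ Set.Ioi (0 : ℝ), Real.sinh (B2 * t) ≠ 0 := fun t ht =>
    (Real.sinh_pos_iff.mpr (mul_pos hB2p ht)).ne'
  constructor
  · -- monotone → condition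
    intro hM
    have hMg : ∀ s t : ℝ, 0 < s → 0 < t → s ≤ t → g s ≤ g t := by
      intro s t hs ht hst
      have h : phiC l1 m1 s / phiC l2 m2 s ≤ phiC l1 m1 t / phiC l2 m2 t :=
        hM (Set.mem_Ioi.mpr hs) (Set.mem_Ioi.mpr ht) hst
      rwa [hratio s hs, hratio t ht] at h
    rw [ge_iff_le, max_le_iff]
    constructor
    · -- b2 - b1 ≤ Δ
      by_contra hcon
      push_neg at hcon
      have hε : d + B1 - B2 < 0 := by rw [hd, hB1, hB2]; linarith
      have hg1 : 0 < g 1 := by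
        have hs1 : 0 < Real.sinh (B1 * 1) := Real.sinh_pos_iff.mpr (by rw [mul_one]; exact hB1p)
        have hs2 : 0 < Real.sinh (B2 * 1) := Real.sinh_pos_iff.mpr (by rw [mul_one]; exact hB2p)
        exact mul_pos hK (mul_pos (Real.exp_pos _) (div_pos hs1 hs2))
      set ε : ℝ := d + B1 - B2 with hεdef
      set L : ℝ := Real.log (g 1 / (2 * K)) with hL
      set T : ℝ := max (max 1 (1 / B2)) (L / ε + 1) with hT
      have hT1 : 1 ≤ T := le_trans (le_max_left _ _) (le_max_left _ _)
      have hT0 : 0 < T := lt_of_lt_of_le one_pos hT1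
      have hTβ : 1 ≤ B2 * T := by
        have h' : 1 / B2 ≤ T := le_trans (le_max_right 1 (1 / B2)) (le_max_left _ _)
        rw [div_le_iff₀ hB2p] at h'
        nlinarith
      have hTε : ε * T < L := by
        have h' : L / ε + 1 ≤ T := le_max_right _ _
        have h2 := mul_le_mul_of_nonpos_left h' hε.le
        have heq : ε * (L / ε + 1) = L + ε := by
          rw [mul_add, mul_one, mul_div_cancel₀ _ hε.ne]
        rw [heq] at h2
        linarith
      have hsinh1 : Real.sinh (B1 * T) ≤ Real.exp (B1 * T) / 2 := by
        rw [Real.sinh_eq]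
        have := Real.exp_pos (-(B1 * T))
        linarith
      have hsinh2 : Real.exp (B2 * T) / 4 ≤ Real.sinh (B2 * T) := by
        rw [Real.sinh_eq]
        have h2 : 2 ≤ Real.exp (B2 * T) := by
          have := Real.add_one_le_exp (B2 * T)
          linarith
        have h3 : Real.exp (-(B2 * T)) ≤ 1 := Real.exp_le_one_iff.mpr (by linarith)
        linarith
      have hgT : g T ≤ 2 * K * Real.exp (ε * T) := by
        have hq : Real.sinh (B1 * T) / Real.sinh (B2 * T)
            ≤ (Real.exp (B1 * T) / 2) / (Real.exp (B2 * T) / 4) :=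
          div_le_div₀ (by positivity) hsinh1 (by positivity) hsinh2
        have hqe : (Real.exp (B1 * T) / 2) / (Real.exp (B2 * T) / 4)
            = 2 * Real.exp (ε * T - d * T) := by
          rw [show ε * T - d * T = B1 * T - B2 * T from by rw [hεdef]; ring, Real.exp_sub]
          have := Real.exp_ne_zero (B2 * T)
          field_simp
          ring
        calc g T ≤ K * (Real.exp (d * T) * ((Real.exp (B1 * T) / 2) / (Real.exp (B2 * T) / 4))) :=
              mul_le_mul_of_nonneg_left
                (mul_le_mul_of_nonneg_left hq (Real.exp_pos _).le) hK.le
          _ = 2 * K * Real.exp (ε * T) := by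
              rw [hqe, show Real.exp (d * T) * (2 * Real.exp (ε * T - d * T))
                  = 2 * (Real.exp (d * T) * Real.exp (ε * T - d * T)) from by ring,
                ← Real.exp_add, show d * T + (ε * T - d * T) = ε * T from by ring]
              ring
      have hlt : 2 * K * Real.exp (ε * T) < g 1 := by
        have h' := Real.exp_lt_exp.mpr hTε
        rw [hL, Real.exp_log (div_pos hg1 (mul_pos two_pos hK))] at h'
        calc 2 * K * Real.exp (ε * T) < 2 * K * (g 1 / (2 * K)) := by
              exact mul_lt_mul_of_pos_left h' (mul_pos two_pos hK)
          _ = g 1 := by field_simp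
      have := hMg 1 T one_pos hT0 hT1
      linarith
    · -- 0 ≤ Δ
      by_contra hcon
      push_neg at hcon
      have hd0 : d < 0 := by rw [hd]; linarith
      set t : ℝ := min 1 ((-d) / (2 * (B1 ^ 2 + B2 ^ 2))) with htdef
      have hBq : 0 < B1 ^ 2 + B2 ^ 2 := add_pos (pow_pos hB1p 2) (pow_pos hB2p 2)
      have ht0 : 0 < t := lt_min one_pos (div_pos (by linarith) (mul_pos two_pos hBq))
      have ht1 : t ≤ 1 := min_le_left _ _
      have hts : t ≤ (-d) / (2 * (B1 ^ 2 + B2 ^ 2)) := min_le_right _ _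
      have hs0 : 0 < t / 2 := by linarith
      have hexpkey : d * t + (B1 * t) ^ 2 / 2 + (B2 * (t / 2)) ^ 2 / 2 < d * (t / 2) := by
        have h1 : t * (2 * (B1 ^ 2 + B2 ^ 2)) ≤ -d := by
          rw [le_div_iff₀ (mul_pos two_pos hBq)] at hts
          linarith
        nlinarith [mul_le_mul_of_nonneg_left h1 ht0.le, mul_pos (mul_pos ht0 ht0) hBq,
          sq_nonneg B1, sq_nonneg B2, mul_pos ht0 ht0]
      have hcosh1 : Real.cosh (B1 * t) ≤ Real.exp ((B1 * t) ^ 2 / 2) :=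
        cosh_le_exp_sq (mul_pos hB1p ht0).le
      have hcosh2 : Real.cosh (B2 * (t / 2)) ≤ Real.exp ((B2 * (t / 2)) ^ 2 / 2) :=
        cosh_le_exp_sq (mul_pos hB2p hs0).le
      have step1 : Real.cosh (B1 * t) * Real.cosh (B2 * (t / 2))
          ≤ Real.exp ((B1 * t) ^ 2 / 2) * Real.exp ((B2 * (t / 2)) ^ 2 / 2) :=
        mul_le_mul hcosh1 hcosh2 (Real.cosh_pos _).le (Real.exp_pos _).le
      have step2 : Real.exp (d * t) * (Real.cosh (B1 * t) * Real.cosh (B2 * (t / 2)))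
          < Real.exp (d * (t / 2)) := by
        have h' : Real.exp (d * t) * (Real.exp ((B1 * t) ^ 2 / 2)
            * Real.exp ((B2 * (t / 2)) ^ 2 / 2)) < Real.exp (d * (t / 2)) := by
          rw [← Real.exp_add, ← Real.exp_add]
          exact Real.exp_lt_exp.mpr (by linarith)
        calc Real.exp (d * t) * (Real.cosh (B1 * t) * Real.cosh (B2 * (t / 2)))
            ≤ Real.exp (d * t) * (Real.exp ((B1 * t) ^ 2 / 2)
              * Real.exp ((B2 * (t / 2)) ^ 2 / 2)) :=
              mul_le_mul_of_nonneg_left step1 (Real.exp_pos _).le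
          _ < Real.exp (d * (t / 2)) := h'
      have hb_t : Real.sinh (B1 * t) / Real.sinh (B2 * t)
          ≤ (B1 * t * Real.cosh (B1 * t)) / (B2 * t) := by
        apply div_le_div₀ _ _ (mul_pos hB2p ht0)
          (Real.self_le_sinh_iff.mpr (mul_pos hB2p ht0).le)
        · exact mul_nonneg (mul_pos hB1p ht0).le (Real.cosh_pos _).le
        · exact sinh_le_mul_cosh (mul_pos hB1p ht0).le
      have hb_s : (B1 * (t / 2)) / (B2 * (t / 2) * Real.cosh (B2 * (t / 2)))
          ≤ Real.sinh (B1 * (t / 2)) / Real.sinh (B2 * (t / 2)) := by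
        apply div_le_div₀ (Real.sinh_nonneg_iff.mpr (mul_pos hB1p hs0).le)
          (Real.self_le_sinh_iff.mpr (mul_pos hB1p hs0).le)
          (Real.sinh_pos_iff.mpr (mul_pos hB2p hs0))
        exact sinh_le_mul_cosh (mul_pos hB2p hs0).le
      have hmain : Real.exp (d * t) * ((B1 * t * Real.cosh (B1 * t)) / (B2 * t))
          < Real.exp (d * (t / 2))
            * ((B1 * (t / 2)) / (B2 * (t / 2) * Real.cosh (B2 * (t / 2)))) := by
        rw [show Real.exp (d * t) * ((B1 * t * Real.cosh (B1 * t)) / (B2 * t))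
            = (Real.exp (d * t) * (B1 * t * Real.cosh (B1 * t))) / (B2 * t) from
            (mul_div_assoc _ _ _).symm,
          show Real.exp (d * (t / 2)) * ((B1 * (t / 2))
              / (B2 * (t / 2) * Real.cosh (B2 * (t / 2))))
            = (Real.exp (d * (t / 2)) * (B1 * (t / 2)))
              / (B2 * (t / 2) * Real.cosh (B2 * (t / 2))) from (mul_div_assoc _ _ _).symm,
          div_lt_div_iff₀ (mul_pos hB2p ht0)
            (mul_pos (mul_pos hB2p hs0) (Real.cosh_pos _))]
        calc Real.exp (d * t) * (B1 * t * Real.cosh (B1 * t))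
              * (B2 * (t / 2) * Real.cosh (B2 * (t / 2)))
            = (B1 * B2 * (t ^ 2 / 2))
              * (Real.exp (d * t) * (Real.cosh (B1 * t) * Real.cosh (B2 * (t / 2)))) := by ring
          _ < (B1 * B2 * (t ^ 2 / 2)) * Real.exp (d * (t / 2)) := by
              exact mul_lt_mul_of_pos_left step2
                (mul_pos (mul_pos hB1p hB2p) (div_pos (pow_pos ht0 2) two_pos))
          _ = Real.exp (d * (t / 2)) * (B1 * (t / 2)) * (B2 * t) := by ring
      have u1 : g t ≤ K * (Real.exp (d * t) * ((B1 * t * Real.cosh (B1 * t)) / (B2 * t))) :=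
        mul_le_mul_of_nonneg_left
          (mul_le_mul_of_nonneg_left hb_t (Real.exp_pos _).le) hK.le
      have u2 : K * (Real.exp (d * t) * ((B1 * t * Real.cosh (B1 * t)) / (B2 * t)))
          < K * (Real.exp (d * (t / 2))
            * ((B1 * (t / 2)) / (B2 * (t / 2) * Real.cosh (B2 * (t / 2))))) :=
        mul_lt_mul_of_pos_left hmain hK
      have u3 : K * (Real.exp (d * (t / 2))
            * ((B1 * (t / 2)) / (B2 * (t / 2) * Real.cosh (B2 * (t / 2))))) ≤ g (t / 2) :=
        mul_le_mul_of_nonneg_left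
          (mul_le_mul_of_nonneg_left hb_s (Real.exp_pos _).le) hK.le
      have := hMg (t / 2) t hs0 ht0 (by linarith)
      linarith
  · -- condition → monotone
    intro hcond
    have hdmax : max (B2 - B1) 0 ≤ d := by
      have ha : bC l2 m2 - bC l1 m1 ≤ 2 * (l2 - l1) + m2 - m1 :=
        le_trans (le_max_left _ _) hcond
      have hb : (0:ℝ) ≤ 2 * (l2 - l1) + m2 - m1 := le_trans (le_max_right _ _) hcond
      apply max_le
      · rw [hB1, hB2, hd]; linarith
      · rw [hd]; linarith
    have hgd : ∀ t ∈ Set.Ioi (0 : ℝ), HasDerivAt g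
        (K * (Real.exp (d * t) * d * (Real.sinh (B1 * t) / Real.sinh (B2 * t))
          + Real.exp (d * t) * ((Real.cosh (B1 * t) * B1 * Real.sinh (B2 * t)
            - Real.sinh (B1 * t) * (Real.cosh (B2 * t) * B2)) / Real.sinh (B2 * t) ^ 2))) t := by
      intro t ht
      have hE : HasDerivAt (fun t : ℝ => Real.exp (d * t)) (Real.exp (d * t) * d) t := by
        simpa using ((hasDerivAt_id t).const_mul d).exp
      have hS1 : HasDerivAt (fun t : ℝ => Real.sinh (B1 * t)) (Real.cosh (B1 * t) * B1) t := by
        simpa using ((hasDerivAt_id t).const_mul B1).sinh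
      have hS2 : HasDerivAt (fun t : ℝ => Real.sinh (B2 * t)) (Real.cosh (B2 * t) * B2) t := by
        simpa using ((hasDerivAt_id t).const_mul B2).sinh
      exact ((hE.mul (hS1.div hS2 (hS2ne t ht))).const_mul K)
    have hmono : MonotoneOn g (Set.Ioi (0 : ℝ)) := by
      apply monotoneOn_of_deriv_nonneg (convex_Ioi 0)
      · apply ContinuousOn.mul continuousOn_const
        apply ContinuousOn.mul (by fun_prop)
        exact ContinuousOn.div (by fun_prop) (by fun_prop) hS2ne
      · rw [interior_Ioi]
        intro t ht
        exact (hgd t ht).differentiableAt.differentiableWithinAt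
      · rw [interior_Ioi]
        intro t ht
        rw [(hgd t ht).deriv]
        have hG := coreG hB1p hB2p ht hdmax
        have hS2' := hS2ne t ht
        have hrw : K * (Real.exp (d * t) * d * (Real.sinh (B1 * t) / Real.sinh (B2 * t))
            + Real.exp (d * t) * ((Real.cosh (B1 * t) * B1 * Real.sinh (B2 * t)
              - Real.sinh (B1 * t) * (Real.cosh (B2 * t) * B2)) / Real.sinh (B2 * t) ^ 2))
            = K * Real.exp (d * t)
              * ((d * (Real.sinh (B1 * t) * Real.sinh (B2 * t))
                + B1 * Real.cosh (B1 * t) * Real.sinh (B2 * t)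
                - B2 * Real.sinh (B1 * t) * Real.cosh (B2 * t)) / Real.sinh (B2 * t) ^ 2) := by
          field_simp
          ring
        rw [hrw]
        exact mul_nonneg (mul_nonneg hK.le (Real.exp_pos _).le)
          (div_nonneg hG (sq_nonneg _))
    intro s hs t ht hst
    show phiC l1 m1 s / phiC l2 m2 s ≤ phiC l1 m1 t / phiC l2 m2 t
    rw [hratio s hs, hratio t ht]
    exact hmono hs ht hst
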